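/- Let L ⊆ Σ* be paddable with padding function pad and decoding function dec, let u and H be as constructed from a nontrivial L (u(xx)=x, u(z)=w₁ ∈ L if w(z) odd, u(z)=w₀ ∉ L if z asymmetric with w(z) even). Define pad'(z,y) = pad(u(z),y)·pad(u(z),y) and dec'(z) = dec(u(z)). Then for all z, y ∈ Σ*: (i) pad'(z,y) ∈ H if and only if z ∈ H, and (ii) dec'(pad'(z,y)) = y. -/
import Mathlib


theorem stmt_6 (k : ℕ) (hk : 2 ≤ k) (L : Set (List (Fin k)))
    (pad : List (Fin k) → List (Fin k) → List (Fin k)) (dec : List (Fin k) → List (Fin k))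
    (hpad : ∀ x y, pad x y ∈ L ↔ x ∈ L) (hdec : ∀ x y, dec (pad x y) = y)
    (w₀ w₁ : List (Fin k)) (hw₀ : w₀ ∉ L) (hw₁ : w₁ ∈ L)
    (u : List (Fin k) → List (Fin k))
    (hu_sym : ∀ x : List (Fin k), u (x ++ x) = x)
    (hu_odd : ∀ z : List (Fin k), Odd (z.map (Fin.val)).sum → u z = w₁)
    (hu_even_asym : ∀ z : List (Fin k),
      (¬ ∃ x : List (Fin k), z = x ++ x) → Even (z.map (Fin.val)).sum → u z = w₀)
    (z y : List (Fin k)) :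
    ((pad (u z) y ++ pad (u z) y) ∈
        ({v | ∃ s ∈ L, v = s ++ s} ∪ {v | Odd (v.map (Fin.val)).sum} :
          Set (List (Fin k))) ↔
      z ∈ ({v | ∃ s ∈ L, v = s ++ s} ∪ {v | Odd (v.map (Fin.val)).sum} :
          Set (List (Fin k)))) ∧
    dec (u (pad (u z) y ++ pad (u z) y)) = y := by
  have hdup : ∀ s x : List (Fin k), s ++ s = x ++ x → s = x := by
    intro s x h
    have h2 := hu_sym s
    rw [h, hu_sym] at h2
    exact h2.symm
  have heven : ∀ s : List (Fin k), Even ((s ++ s).map Fin.val).sum := by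
    intro s
    simp [List.map_append, List.sum_append]
  have hH : ∀ s : List (Fin k),
      (s ++ s) ∈ ({v | ∃ s ∈ L, v = s ++ s} ∪ {v | Odd (v.map (Fin.val)).sum} :
        Set (List (Fin k))) ↔ s ∈ L := by
    intro s
    constructor
    · rintro (⟨x, hx, hxs⟩ | hodd)
      · rwa [hdup s x hxs]
      · exact absurd hodd (Nat.not_odd_iff_even.mpr (heven s))
    · intro hs; exact Or.inl ⟨s, hs, rfl⟩
  constructor
  · rw [hH, hpad]
    by_cases hodd : Odd ((z.map Fin.val).sum)
    · rw [hu_odd z hodd]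
      exact iff_of_true hw₁ (Or.inr hodd)
    · by_cases hsym : ∃ x, z = x ++ x
      · obtain ⟨x, rfl⟩ := hsym
        rw [hu_sym]
        exact (hH x).symm
      · rw [hu_even_asym z hsym (Nat.not_odd_iff_even.mp hodd)]
        constructor
        · intro h; exact absurd h hw₀
        · rintro (⟨s, _, hzs⟩ | h)
          · exact absurd ⟨s, hzs⟩ hsym
          · exact absurd h hodd
  · rw [hu_sym, hdec]
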